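/- arXiv:1909.09401 — 2 statements merged into one kernel-verified Lean document; each statement's English description precedes it below -/
import Mathlib

section
/- If R is a self-full ceer, R ≡ E, and φ is a computable reduction of R to E, then the range of φ meets every E-equivalence class. -/
/-- Computable reducibility of binary relations on ℕ. -/
def CompReduces (R S : ℕ → ℕ → Prop) : Prop :=
  ∃ f : ℕ → ℕ, Computable f ∧ ∀ x y, (R x y ↔ S (f x) (f y))

/-- Bi-reducibility. -/
def CompEquiv (R S : ℕ → ℕ → Prop) : Prop :=
  CompReduces R S ∧ CompReduces S R

/-- Uniform join: evens code `R`, odds code `S`. -/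
def UJoin (R S : ℕ → ℕ → Prop) : ℕ → ℕ → Prop := fun x y =>
  (∃ u v, x = 2 * u ∧ y = 2 * v ∧ R u v) ∨
  (∃ u v, x = 2 * u + 1 ∧ y = 2 * v + 1 ∧ S u v)

/-- Congruence modulo `n` (for `n ≥ 1` this has exactly `n` classes). -/
def IdN (n : ℕ) : ℕ → ℕ → Prop := fun x y => x % n = y % n

/-- `R ⊕ Id_k`, with the convention `R ⊕ Id_0 = R`. -/
def OplusId (R : ℕ → ℕ → Prop) (k : ℕ) : ℕ → ℕ → Prop :=
  if k = 0 then R else UJoin R (IdN k)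

/-- A ceer: a computably enumerable equivalence relation on ℕ. -/
def IsCeer (R : ℕ → ℕ → Prop) : Prop :=
  Equivalence R ∧ REPred (fun p : ℕ × ℕ => R p.1 p.2)

/-- `R` has infinitely many equivalence classes. -/
def InfiniteClasses (R : ℕ → ℕ → Prop) : Prop :=
  ∀ A : Finset ℕ, ∃ x, ∀ a ∈ A, ¬ R x a

/-- `R` has exactly `n` equivalence classes. -/
def ExactlyNClasses (R : ℕ → ℕ → Prop) (n : ℕ) : Prop :=
  ∃ f : Fin n → ℕ, (∀ i j, i ≠ j → ¬ R (f i) (f j)) ∧ ∀ x, ∃ i, R x (f i)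

/-- `R` has an infinite c.e. transversal. -/
def HasInfiniteTransversal (R : ℕ → ℕ → Prop) : Prop :=
  ∃ W : Set ℕ, REPred (· ∈ W) ∧ W.Infinite ∧
    ∀ x ∈ W, ∀ y ∈ W, x ≠ y → ¬ R x y

/-- A dark ceer: infinitely many classes, no infinite c.e. transversal. -/
def IsDark (R : ℕ → ℕ → Prop) : Prop :=
  IsCeer R ∧ InfiniteClasses R ∧ ¬ HasInfiniteTransversal R

/-- `R ≤_I S`: `R ≤ S ⊕ Id_k` for some `k`. -/
def ReducesI (R S : ℕ → ℕ → Prop) : Prop :=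
  ∃ k, CompReduces R (OplusId S k)

/-- The c.e. set `W` intersects infinitely many `R`-classes. -/
def MeetsInfManyClasses (R : ℕ → ℕ → Prop) (W : Set ℕ) : Prop :=
  ∀ A : Finset ℕ, ∃ x ∈ W, ∀ a ∈ A, ¬ R x a

/-! If an `E`-class `[y]` missed the range of `φ`, then for a reduction `g` of `E` to `R` the
map `g ∘ φ` reduces `R` to itself and never lands in the `R`-class of `g y`. Sending `2u` to
`g (φ u)` and every odd number to `g y` then reduces `R ⊕ Id_1` to `R`, against self-fullness. -/

section UJoin

variable {R S : ℕ → ℕ → Prop}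

@[simp]
theorem uJoin_two_mul_two_mul (u v : ℕ) : UJoin R S (2 * u) (2 * v) ↔ R u v := by
  simp [UJoin, Nat.two_mul_ne_two_mul_add_one]

@[simp]
theorem uJoin_two_mul_add_one_two_mul_add_one (u v : ℕ) :
    UJoin R S (2 * u + 1) (2 * v + 1) ↔ S u v := by
  simp [UJoin, Nat.two_mul_ne_two_mul_add_one.symm]

@[simp]
theorem not_uJoin_two_mul_two_mul_add_one (u v : ℕ) : ¬ UJoin R S (2 * u) (2 * v + 1) := by
  simp [UJoin, Nat.two_mul_ne_two_mul_add_one, Nat.two_mul_ne_two_mul_add_one.symm]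

@[simp]
theorem not_uJoin_two_mul_add_one_two_mul (u v : ℕ) : ¬ UJoin R S (2 * u + 1) (2 * v) := by
  simp [UJoin, Nat.two_mul_ne_two_mul_add_one, Nat.two_mul_ne_two_mul_add_one.symm]

end UJoin

def natJoinMap (f g : ℕ → ℕ) (n : ℕ) : ℕ :=
  bif n.bodd then g n.div2 else f n.div2

@[simp]
theorem natJoinMap_two_mul (f g : ℕ → ℕ) (u : ℕ) : natJoinMap f g (2 * u) = f u := by
  simp [natJoinMap, Nat.div2_val]

@[simp]
theorem natJoinMap_two_mul_add_one (f g : ℕ → ℕ) (u : ℕ) :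
    natJoinMap f g (2 * u + 1) = g u := by
  simp [natJoinMap, Nat.div2_val]

theorem Computable.natJoinMap {f g : ℕ → ℕ} (hf : Computable f) (hg : Computable g) :
    Computable (natJoinMap f g) :=
  Computable.cond Primrec.nat_bodd.to_comp (hg.comp Primrec.nat_div2.to_comp)
    (hf.comp Primrec.nat_div2.to_comp)

theorem CompReduces.uJoin_of_disjoint {R S T : ℕ → ℕ → Prop} {f g : ℕ → ℕ}
    (hT : ∀ a b, T a b → T b a) (hf : Computable f) (hg : Computable g)
    (hfR : ∀ x y, R x y ↔ T (f x) (f y)) (hgS : ∀ x y, S x y ↔ T (g x) (g y))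
    (hdisj : ∀ u v, ¬ T (f u) (g v)) :
    CompReduces (UJoin R S) T := by
  refine ⟨natJoinMap f g, hf.natJoinMap hg, fun x y => ?_⟩
  obtain ⟨u, rfl | rfl⟩ := Nat.even_or_odd' x <;> obtain ⟨v, rfl | rfl⟩ := Nat.even_or_odd' y
  · simp [hfR]
  · simp [hdisj]
  · simpa using fun h => hdisj v u (hT _ _ h)
  · simp [hgS]

theorem CompReduces.uJoin_idN_one_of_not_rel {R T : ℕ → ℕ → Prop} (hT : Equivalence T)
    {f : ℕ → ℕ} (hf : Computable f) (hfR : ∀ x y, R x y ↔ T (f x) (f y))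
    {c : ℕ} (hc : ∀ x, ¬ T (f x) c) :
    CompReduces (UJoin R (IdN 1)) T :=
  .uJoin_of_disjoint (fun _ _ => hT.symm) hf (Computable.const c) hfR
    (fun x y => by simp [IdN, Nat.mod_one, hT.refl]) (fun u _ => hc u)

theorem selffull_reduction_onto_classes_general (R E : ℕ → ℕ → Prop)
    (hR : IsCeer R)
    (hsf : ¬ CompReduces (UJoin R (IdN 1)) R)
    (heq : CompEquiv R E)
    (φ : ℕ → ℕ) (hφ : Computable φ) (hred : ∀ x y, R x y ↔ E (φ x) (φ y)) :
    ∀ y, ∃ x, E (φ x) y := by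
  intro y
  by_contra! hy
  obtain ⟨g, hg, hgE⟩ := heq.2
  have hgφ : ∀ x x', R x x' ↔ R (g (φ x)) (g (φ x')) := fun x x' => (hred x x').trans (hgE _ _)
  exact hsf (.uJoin_idN_one_of_not_rel hR.1 (hg.comp hφ) hgφ fun x => (hgE _ y).not.mp (hy x))

theorem selffull_reduction_onto_classes (R E : ℕ → ℕ → Prop)
    (hR : IsCeer R) (hE : IsCeer E)
    (hsf : ¬ CompReduces (UJoin R (IdN 1)) R)
    (heq : CompEquiv R E)
    (φ : ℕ → ℕ) (hφ : Computable φ) (hred : ∀ x y, R x y ↔ E (φ x) (φ y)) :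
    ∀ y, ∃ x, E (φ x) y :=
  selffull_reduction_onto_classes_general R E hR hsf heq φ hφ hred
end

section
/- A ceer R is dark minimal (dark, and every ceer strictly below R is finite) if and only if R has infinitely many classes and every c.e. set W that intersects infinitely many R-classes intersects every R-class. -/
/-!
(⇒) Let `W` be c.e. and meet infinitely many classes. Restricting `R` to a computable
enumeration `h` of `W` gives an infinite ceer below `R`, so by minimality `R` reduces back to it,
and `k = h ∘ f` is a computable self-reduction of `R` with values in `W`. For any `y`, the orbit
`y, k y, k² y, …` is c.e.; darkness forbids it from being a transversal, so `R (kᵃ y) (kᵇ y)` for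
some `a < b`, whence `R y (kᵇ⁻ᵃ y)` with `kᵇ⁻ᵃ y ∈ W`.

(⇐) An infinite c.e. transversal `W` would, after removing one point `x₀`, still meet infinitely
many classes but miss the class of `x₀`. If `g : S ≤ R` with `S` infinite, the range of `g` meets
infinitely many classes, hence all of them, and selecting computably a preimage of each class
gives `R ≤ S`.
-/

open Nat.Partrec.Code

theorem rePred_iff_exists_computable₂ {p : ℕ → Prop} :
    REPred p ↔ ∃ q : ℕ → ℕ → Bool, Computable₂ q ∧ ∀ x, p x ↔ ∃ s, q s x = true := by
  constructor
  · intro hp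
    obtain ⟨c, hc⟩ := exists_code.1 hp
    refine ⟨fun s x => (evaln s c x).isSome,
      (Primrec.option_isSome.comp <| primrec_evaln.comp
        ((Primrec.fst.pair (Primrec.const c)).pair Primrec.snd)).to_comp, fun x => ?_⟩
    have hdom : p x ↔ (eval c x).Dom := by
      rw [hc]; simp [Part.dom_iff_mem, Encodable.decode]
    simp only [hdom, Part.dom_iff_mem, evaln_complete, Option.isSome_iff_exists]
    exact ⟨fun ⟨a, s, h⟩ => ⟨s, a, h⟩, fun ⟨s, a, h⟩ => ⟨a, s, h⟩⟩
  · rintro ⟨q, hq, hpq⟩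
    refine (Partrec.rfind (p := fun x s => Part.some (q s x))
      (hq.comp Computable.snd Computable.fst).partrec).dom_re.of_eq fun x => ?_
    rw [hpq]
    exact Nat.rfind_dom.trans <| exists_congr fun s =>
      ⟨fun h => (Part.mem_some_iff.1 h.1).symm,
        fun h => ⟨Part.mem_some_iff.2 h.symm, fun _ => trivial⟩⟩

theorem REPred.and_computablePred {p c : ℕ → Prop} (hp : REPred p) (hc : ComputablePred c) :
    REPred fun x => p x ∧ c x := by
  classical
  obtain ⟨q, hq, hpq⟩ := rePred_iff_exists_computable₂.1 hp
  refine rePred_iff_exists_computable₂.2 ⟨fun s x => q s x && decide (c x),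
    Primrec.and.to_comp.comp₂ hq (hc.decide.comp Computable.snd).to₂, fun x => ?_⟩
  simp [hpq]

theorem Computable.rePred_range {g : ℕ → ℕ} (hg : Computable g) :
    REPred (· ∈ Set.range g) :=
  rePred_iff_exists_computable₂.2 ⟨fun n x => decide (g n = x),
    Primrec.eq.decide.to_comp.comp₂ (hg.comp Computable.fst).to₂ Computable.snd.to₂,
    fun x => by simp⟩

theorem REPred.exists_computable_range_eq {W : Set ℕ} (hW : REPred (· ∈ W)) (hne : W.Nonempty) :
    ∃ h : ℕ → ℕ, Computable h ∧ Set.range h = W := by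
  obtain ⟨a, ha⟩ := hne
  obtain ⟨q, hq, hpq⟩ := rePred_iff_exists_computable₂.1 hW
  have hu₁ : Computable fun m : ℕ => m.unpair.1 := (Primrec.fst.comp Primrec.unpair).to_comp
  have hu₂ : Computable fun m : ℕ => m.unpair.2 := (Primrec.snd.comp Primrec.unpair).to_comp
  refine ⟨fun m => cond (q m.unpair.1 m.unpair.2) m.unpair.2 a,
    (hq.comp hu₁ hu₂).cond hu₂ (Computable.const a), Set.ext fun x => ⟨?_, fun hx => ?_⟩⟩
  · rintro ⟨m, rfl⟩
    cases hm : q m.unpair.1 m.unpair.2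
    · simpa [hm] using ha
    · simpa [hm] using (hpq _).2 ⟨_, hm⟩
  · obtain ⟨s, hs⟩ := (hpq x).1 hx
    exact ⟨Nat.pair s x, by simp [hs]⟩

theorem REPred.exists_computable_choice {P : ℕ → ℕ → Prop}
    (hP : REPred fun q : ℕ × ℕ => P q.1 q.2) (htot : ∀ y, ∃ n, P y n) :
    ∃ sel : ℕ → ℕ, Computable sel ∧ ∀ y, P y (sel y) := by
  obtain ⟨q, hq, hpq⟩ := rePred_iff_exists_computable₂.1 <|
    hP.comp (α := ℕ) Primrec.unpair.to_comp
  -- search for a code `m = ⟨stage, witness⟩`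
  let Q : ℕ → ℕ → Prop := fun y m => q m.unpair.1 (Nat.pair y m.unpair.2) = true
  have hQ : ∀ y, ∃ m, Q y m := fun y => by
    obtain ⟨n, hn⟩ := htot y
    obtain ⟨s, hs⟩ := (hpq (Nat.pair y n)).1 (by simpa using hn)
    exact ⟨Nat.pair s n, by simpa [Q] using hs⟩
  have hQc : ComputablePred fun p : ℕ × ℕ => Q p.1 p.2 :=
    ComputablePred.computable_iff.2 ⟨_, hq.comp
      ((Primrec.fst.comp Primrec.unpair).comp Primrec.snd).to_comp
      (Primrec₂.natPair.comp Primrec.fst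
        ((Primrec.snd.comp Primrec.unpair).comp Primrec.snd)).to_comp, rfl⟩
  refine ⟨fun y => (Nat.find (hQ y)).unpair.2,
    (Primrec.snd.comp Primrec.unpair).to_comp.comp (Computable.find hQc hQ), fun y => ?_⟩
  simpa using (hpq _).2 ⟨_, Nat.find_spec (hQ y)⟩

theorem Computable.iterate {k : ℕ → ℕ} (hk : Computable k) (y : ℕ) :
    Computable fun n => k^[n] y := by
  refine (Computable.nat_rec Computable.id (Computable.const y)
    (hk.comp (Computable.snd.comp Computable.snd)).to₂).of_eq fun n => ?_
  induction n with
  | zero => rfl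
  | succ m ih => rw [Function.iterate_succ_apply', ← ih]; rfl

section Classes

variable {R S : ℕ → ℕ → Prop}

theorem InfiniteClasses.not_exactlyNClasses (hS : InfiniteClasses S) (n : ℕ) :
    ¬ ExactlyNClasses S n := by
  rintro ⟨f, -, hcov⟩
  obtain ⟨x, hx⟩ := hS (Finset.univ.image f)
  obtain ⟨i, hi⟩ := hcov x
  exact hx (f i) (Finset.mem_image_of_mem f (Finset.mem_univ i)) hi

theorem exists_exactlyNClasses_of_not_infiniteClasses (hS : Equivalence S)
    (hfin : ¬ InfiniteClasses S) : ∃ n, ExactlyNClasses S n := by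
  let s : Setoid ℕ := ⟨S, hS⟩
  obtain ⟨A, hA⟩ : ∃ A : Finset ℕ, ∀ x, ∃ a ∈ A, S x a := by
    simpa [InfiniteClasses] using hfin
  have : Finite (Quotient s) := by
    refine Finite.of_surjective (fun a : A => Quotient.mk s a) fun c => ?_
    induction c using Quotient.inductionOn with
    | h x =>
      obtain ⟨a, ha, hxa⟩ := hA x
      exact ⟨⟨a, ha⟩, Quotient.sound (hS.symm hxa)⟩
  obtain ⟨n, ⟨e⟩⟩ := Finite.exists_equiv_fin (Quotient s)
  refine ⟨n, fun i => (e.symm i).out, fun i j hij hR => hij ?_, fun x => ⟨e ⟦x⟧, ?_⟩⟩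
  · simpa using Quotient.sound (s := s) hR
  · exact Quotient.exact (s := s) (by simp)

theorem IsCeer.comap (hR : IsCeer R) {h : ℕ → ℕ} (hh : Computable h) :
    IsCeer fun u v => R (h u) (h v) :=
  ⟨⟨fun _ => hR.1.refl _, hR.1.symm, hR.1.trans⟩,
    hR.2.comp ((hh.comp Computable.fst).pair (hh.comp Computable.snd))⟩

theorem infiniteClasses_iff_meetsInfManyClasses_range (hR : Equivalence R) {g : ℕ → ℕ}
    (hg : ∀ x y, S x y ↔ R (g x) (g y)) :
    InfiniteClasses S ↔ MeetsInfManyClasses R (Set.range g) := by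
  classical
  constructor
  · intro hS A
    by_contra! hA
    -- a `g`-preimage of each class of `A` that the range reaches
    let z : ℕ → ℕ := fun a => if hz : ∃ z, R (g z) a then hz.choose else 0
    obtain ⟨x, hx⟩ := hS (A.image z)
    obtain ⟨a, ha, hxa⟩ := hA (g x) ⟨x, rfl⟩
    have hz : ∃ z, R (g z) a := ⟨x, hxa⟩
    refine hx (z a) (Finset.mem_image_of_mem z ha) ((hg _ _).2 ?_)
    simpa [z, hz] using hR.trans hxa (hR.symm hz.choose_spec)
  · intro hW A
    obtain ⟨_, ⟨x, rfl⟩, hx⟩ := hW (A.image g)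
    exact ⟨x, fun a ha hxa => hx (g a) (Finset.mem_image_of_mem g ha) ((hg x a).1 hxa)⟩

end Classes

section Transversals

variable {R : ℕ → ℕ → Prop}

theorem hasInfiniteTransversal_of_computable_seq (hR : Equivalence R) {g : ℕ → ℕ}
    (hg : Computable g) (hsep : ∀ a b, a < b → ¬ R (g a) (g b)) :
    HasInfiniteTransversal R := by
  have hsep' : ∀ a b, a ≠ b → ¬ R (g a) (g b) := fun a b hab hR' =>
    hab.lt_or_gt.elim (hsep a b · hR') (hsep b a · (hR.symm hR'))
  refine ⟨Set.range g, hg.rePred_range,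
    Set.infinite_range_of_injective fun a b hab => ?_, ?_⟩
  · by_contra hne
    exact hsep' a b hne (hab ▸ hR.refl _)
  · rintro _ ⟨a, rfl⟩ _ ⟨b, rfl⟩ hne
    exact hsep' a b (ne_of_apply_ne g hne)

theorem rel_iterate_iff {k : ℕ → ℕ} (hk : ∀ x y, R x y ↔ R (k x) (k y)) (n : ℕ) (x y : ℕ) :
    R (k^[n] x) (k^[n] y) ↔ R x y := by
  induction n with
  | zero => rfl
  | succ n ih => rw [Function.iterate_succ_apply', Function.iterate_succ_apply', ← hk, ih]

theorem exists_rel_iterate_of_not_hasInfiniteTransversal (hR : Equivalence R)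
    (hT : ¬ HasInfiniteTransversal R) {k : ℕ → ℕ} (hk : Computable k)
    (hkR : ∀ x y, R x y ↔ R (k x) (k y)) (y : ℕ) : ∃ n, R y (k^[n + 1] y) := by
  by_contra! hy
  refine hT (hasInfiniteTransversal_of_computable_seq hR (hk.iterate y) fun a b hab hR' => ?_)
  obtain ⟨n, rfl⟩ := Nat.exists_eq_add_of_lt hab
  rw [Nat.add_assoc, Function.iterate_add_apply] at hR'
  exact hy n ((rel_iterate_iff hkR a _ _).1 hR')

theorem meetsInfManyClasses_of_transversal (hR : Equivalence R) {W : Set ℕ} (hW : W.Infinite)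
    (htr : ∀ x ∈ W, ∀ y ∈ W, x ≠ y → ¬ R x y) : MeetsInfManyClasses R W := by
  intro A
  have hfin : {w ∈ W | ∃ a ∈ A, R w a}.Finite := by
    refine Set.Finite.subset (s := ⋃ a ∈ (A : Set ℕ), {w ∈ W | R w a})
      (A.finite_toSet.biUnion fun a _ => ?_) ?_
    · exact Set.Subsingleton.finite fun u ⟨hu, hua⟩ v ⟨hv, hva⟩ => by
        by_contra hne
        exact htr u hu v hv hne (hR.trans hua (hR.symm hva))
    · rintro w ⟨hw, a, ha, hwa⟩
      exact Set.mem_biUnion ha ⟨hw, hwa⟩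
  obtain ⟨w, hwW, hw⟩ := (hW.sdiff hfin).nonempty
  exact ⟨w, hwW, fun a ha hwa => hw ⟨hwW, a, ha, hwa⟩⟩

theorem not_hasInfiniteTransversal_of_forall_meets (hR : Equivalence R)
    (hmeet : ∀ W : Set ℕ, REPred (· ∈ W) → MeetsInfManyClasses R W → ∀ y, ∃ x ∈ W, R x y) :
    ¬ HasInfiniteTransversal R := by
  rintro ⟨W, hWre, hW, htr⟩
  obtain ⟨x₀, hx₀⟩ := hW.nonempty
  -- `W \ {x₀}` is still an infinite transversal, so it must meet the class of `x₀`
  have hW' : REPred (· ∈ W \ {x₀}) :=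
    (hWre.and_computablePred (PrimrecPred.computablePred
      (Primrec.eq.comp Primrec.id (Primrec.const x₀))).not).of_eq fun _ => Iff.rfl
  have htr' : ∀ x ∈ W \ {x₀}, ∀ y ∈ W \ {x₀}, x ≠ y → ¬ R x y :=
    fun x hx y hy => htr x hx.1 y hy.1
  obtain ⟨x, ⟨hxW, hx⟩, hxR⟩ := hmeet _ hW'
    (meetsInfManyClasses_of_transversal hR (hW.sdiff (Set.finite_singleton x₀)) htr') x₀
  exact htr x hxW x₀ hx₀ hx hxR

end Transversals

section Reductions

variable {R S : ℕ → ℕ → Prop}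

theorem compReduces_of_forall_exists_rel (hR : IsCeer R) {g : ℕ → ℕ} (hg : Computable g)
    (hgS : ∀ x y, S x y ↔ R (g x) (g y)) (hcov : ∀ y, ∃ n, R (g n) y) : CompReduces R S := by
  obtain ⟨sel, hsel, hsel_spec⟩ := REPred.exists_computable_choice
    (P := fun y n => R (g n) y) (hR.2.comp ((hg.comp Computable.snd).pair Computable.fst)) hcov
  refine ⟨sel, hsel, fun x y => ?_⟩
  rw [hgS]
  exact ⟨fun hxy => hR.1.trans (hsel_spec x) (hR.1.trans hxy (hR.1.symm (hsel_spec y))),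
    fun hxy => hR.1.trans (hR.1.symm (hsel_spec x)) (hR.1.trans hxy (hsel_spec y))⟩

theorem exists_selfReduction_into (hR : IsCeer R)
    (hmin : ∀ S : ℕ → ℕ → Prop, IsCeer S → CompReduces S R →
      ¬ CompReduces R S → ∃ n, ExactlyNClasses S n)
    {W : Set ℕ} (hW : REPred (· ∈ W)) (hWR : MeetsInfManyClasses R W) :
    ∃ k : ℕ → ℕ, Computable k ∧ (∀ x, k x ∈ W) ∧ ∀ x y, R x y ↔ R (k x) (k y) := by
  obtain ⟨a, ha, -⟩ := hWR ∅
  obtain ⟨h, hh, rfl⟩ := hW.exists_computable_range_eq ⟨a, ha⟩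
  have hS : InfiniteClasses fun u v => R (h u) (h v) :=
    (infiniteClasses_iff_meetsInfManyClasses_range hR.1 fun _ _ => Iff.rfl).2 hWR
  obtain ⟨f, hf, hfR⟩ : CompReduces R fun u v => R (h u) (h v) := by
    by_contra hRS
    obtain ⟨n, hn⟩ := hmin _ (hR.comap hh) ⟨h, hh, fun _ _ => Iff.rfl⟩ hRS
    exact hS.not_exactlyNClasses n hn
  exact ⟨h ∘ f, hh.comp hf, fun x => ⟨f x, rfl⟩, hfR⟩

end Reductions

theorem dark_minimal_characterization (R : ℕ → ℕ → Prop) (hR : IsCeer R) :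
    (IsDark R ∧ ∀ S : ℕ → ℕ → Prop, IsCeer S → CompReduces S R →
        ¬ CompReduces R S → ∃ n, ExactlyNClasses S n) ↔
    (InfiniteClasses R ∧ ∀ W : Set ℕ, REPred (· ∈ W) →
        MeetsInfManyClasses R W → ∀ y, ∃ x ∈ W, R x y) := by
  constructor
  · rintro ⟨⟨-, hinf, hT⟩, hmin⟩
    refine ⟨hinf, fun W hW hWR y => ?_⟩
    obtain ⟨k, hk, hkW, hkR⟩ := exists_selfReduction_into hR hmin hW hWR
    obtain ⟨n, hn⟩ := exists_rel_iterate_of_not_hasInfiniteTransversal hR.1 hT hk hkR y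
    exact ⟨k^[n + 1] y, Function.iterate_succ_apply' k n y ▸ hkW _, hR.1.symm hn⟩
  · rintro ⟨hinf, hmeet⟩
    refine ⟨⟨hR, hinf, not_hasInfiniteTransversal_of_forall_meets hR.1 hmeet⟩,
      fun S hS ⟨g, hg, hgS⟩ hRS => ?_⟩
    by_contra hfin
    have hSinf : InfiniteClasses S :=
      by_contra (hfin ∘ exists_exactlyNClasses_of_not_infiniteClasses hS.1)
    refine hRS (compReduces_of_forall_exists_rel hR hg hgS fun y => ?_)
    obtain ⟨_, ⟨n, rfl⟩, hn⟩ := hmeet _ hg.rePred_range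
      ((infiniteClasses_iff_meetsInfManyClasses_range hR.1 hgS).1 hSinf) y
    exact ⟨n, hn⟩
end
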